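/- arXiv:2208.07331 — 4 statements merged into one kernel-verified Lean document; each statement's English description precedes it below -/
import Mathlib

section
/- Let 𝒢 be a class of functions 𝒳 → ℝ closed under linear combinations, and suppose the structural mechanism is g(x, ŷ) = g₁(x) + α·ŷ with g₁ ∈ 𝒢 and α > 0. Let f_θ : 𝒳 → ℝ be deterministic and overparameterized with respect to 𝒢 (no g' ∈ 𝒢 and c ∈ ℝ satisfy f_θ(x) = c·g'(x) for all x ∈ 𝒳). Then M_Y(x, ŷ) = g₁(x) + α·ŷ is identifiable from the observational data: any function h of the form h(x, ŷ) = g₁'(x) + α'·ŷ with g₁' ∈ 𝒢 and α' ∈ ℝ satisfying h(x, f_θ(x)) = g(x, f_θ(x)) for all x ∈ 𝒳 must have α' = α and g₁'(x) = g₁(x) for all x ∈ 𝒳. -/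
/-! If `α' ≠ α`, the agreement `g₁' + α' fθ = g₁ + α fθ` exhibits `fθ` as the multiple
`(α - α')⁻¹ (g₁' - g₁)` of an element of the linearly closed class `𝒢`, contradicting
overparameterization. Once `α' = α`, the `fθ` terms cancel pointwise. -/

theorem coeff_eq_of_add_mul_eq_add_mul {𝒳 𝕜 : Type*} [Field 𝕜] {𝒢 : Set (𝒳 → 𝕜)}
    (hclosed : ∀ g₁ g₂ : 𝒳 → 𝕜, g₁ ∈ 𝒢 → g₂ ∈ 𝒢 → ∀ a₁ a₂ : 𝕜,
      (fun x => a₁ * g₁ x + a₂ * g₂ x) ∈ 𝒢)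
    {fθ : 𝒳 → 𝕜} (hover : ¬ ∃ g' ∈ 𝒢, ∃ c : 𝕜, ∀ x : 𝒳, fθ x = c * g' x)
    {g₁ g₁' : 𝒳 → 𝕜} (hg₁ : g₁ ∈ 𝒢) (hg₁' : g₁' ∈ 𝒢) {α α' : 𝕜}
    (hagree : ∀ x : 𝒳, g₁' x + α' * fθ x = g₁ x + α * fθ x) :
    α' = α := by
  by_contra hne
  have hsub : α - α' ≠ 0 := sub_ne_zero.mpr (Ne.symm hne)
  refine hover ⟨fun x => 1 * g₁' x + (-1) * g₁ x, hclosed _ _ hg₁' hg₁ 1 (-1),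
    (α - α')⁻¹, fun x => ?_⟩
  rw [eq_inv_mul_iff_mul_eq₀ hsub]
  linear_combination (hagree x).symm

theorem stmt_5_general {𝒳 : Type*} (𝒢 : Set (𝒳 → ℝ))
    (hclosed : ∀ g₁ g₂ : 𝒳 → ℝ, g₁ ∈ 𝒢 → g₂ ∈ 𝒢 → ∀ a₁ a₂ : ℝ,
      (fun x => a₁ * g₁ x + a₂ * g₂ x) ∈ 𝒢)
    (fθ : 𝒳 → ℝ)
    (hover : ¬ ∃ g' ∈ 𝒢, ∃ c : ℝ, ∀ x : 𝒳, fθ x = c * g' x)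
    (g₁ : 𝒳 → ℝ) (hg₁ : g₁ ∈ 𝒢) (α : ℝ)
    (g₁' : 𝒳 → ℝ) (hg₁' : g₁' ∈ 𝒢) (α' : ℝ)
    (hagree : ∀ x : 𝒳, g₁' x + α' * fθ x = g₁ x + α * fθ x) :
    α' = α ∧ ∀ x : 𝒳, g₁' x = g₁ x := by
  have hcoeff : α' = α := coeff_eq_of_add_mul_eq_add_mul hclosed hover hg₁ hg₁' hagree
  subst hcoeff
  exact ⟨rfl, fun x => add_right_cancel (hagree x)⟩

/-- Proposition 4 (Identifiability from overparameterization): for the separable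
mechanism `g(x,yh) = g₁(x) + α·yh` with `g₁ ∈ 𝒢`, `α > 0`, and `fθ`
overparameterized with respect to the linearly closed class `𝒢`, any hypothesis
`h(x,yh) = g₁'(x) + α'·yh` with `g₁' ∈ 𝒢` agreeing with `g` on the observed
support `yh = fθ(x)` must satisfy `α' = α` and `g₁' = g₁` pointwise. -/
theorem stmt_5 {𝒳 : Type*} (𝒢 : Set (𝒳 → ℝ))
    (hclosed : ∀ g₁ g₂ : 𝒳 → ℝ, g₁ ∈ 𝒢 → g₂ ∈ 𝒢 → ∀ a₁ a₂ : ℝ,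
      (fun x => a₁ * g₁ x + a₂ * g₂ x) ∈ 𝒢)
    (fθ : 𝒳 → ℝ)
    (hover : ¬ ∃ g' ∈ 𝒢, ∃ c : ℝ, ∀ x : 𝒳, fθ x = c * g' x)
    (g₁ : 𝒳 → ℝ) (hg₁ : g₁ ∈ 𝒢) (α : ℝ) (hα : 0 < α)
    (g₁' : 𝒳 → ℝ) (hg₁' : g₁' ∈ 𝒢) (α' : ℝ)
    (hagree : ∀ x : 𝒳, g₁' x + α' * fθ x = g₁ x + α * fθ x) :
    α' = α ∧ ∀ x : 𝒳, g₁' x = g₁ x :=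
  stmt_5_general 𝒢 hclosed fθ hover g₁ hg₁ α g₁' hg₁' α' hagree
end

section
/- Suppose the structural mechanism is separable: g(x, ŷ) = g₁(x) + g₂(ŷ) where g₁ : ℝ → ℝ is differentiable and g₂ : 𝒮 → ℝ is a function on a finite set 𝒮 ⊆ ℝ of prediction values, with |𝒮| ≥ 2. Let f_θ : ℝ → 𝒮 be the deployed classifier and suppose every value in 𝒮 is attained by f_θ on a set of positive measure, and the preimage f_θ⁻¹(s) of each s ∈ 𝒮 covers, across all s, connected intervals whose union is ℝ. Suppose h(x, ŷ) = h₁(x) + h₂(ŷ) with h₁ differentiable agrees with g on the observed set {(x, f_θ(x)) : x ∈ ℝ}. Then h₁' (the derivative) equals g₁' everywhere, and consequently h(x, ŷ) − g(x, ŷ) is a constant independent of both x and ŷ; in particular if h and g agree at a single off-support point, they agree everywhere. -/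
/-!
`h₁ - g₁ = g₂ ∘ fθ - h₂ ∘ fθ` is continuous and locally constant off the finite set `D` of
boundary points, hence constant on `ℝ` (its derivative vanishes off a countable set, so the
fundamental theorem of calculus applies); the same constant then relates `h₂` and `g₂` on every
fibre of `fθ`, which is nonempty because it has positive measure.
-/

open MeasureTheory Filter Topology

theorem Continuous.apply_eq_apply_of_eventuallyEq_off_countable {E : Type*}
    [NormedAddCommGroup E] [NormedSpace ℝ E] [CompleteSpace E] {F : ℝ → E} (hF : Continuous F)
    {s : Set ℝ} (hs : s.Countable) (hloc : ∀ x ∉ s, ∀ᶠ y in 𝓝 x, F y = F x) (a b : ℝ) :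
    F a = F b := by
  have hderiv : ∀ x ∈ Set.Ioo (min a b) (max a b) \ s, HasDerivAt F 0 x := fun x hx =>
    (hasDerivAt_const x (F x)).congr_of_eventuallyEq (hloc x hx.2)
  have hFTC := integral_eq_of_hasDerivAt_off_countable F 0 hs hF.continuousOn hderiv
    intervalIntegrable_const
  simp only [Pi.zero_apply, intervalIntegral.integral_zero] at hFTC
  exact (sub_eq_zero.mp hFTC.symm).symm

theorem stmt_7_general (S : Finset ℝ)
    (g₁ h₁ : ℝ → ℝ) (hg₁ : Differentiable ℝ g₁) (hh₁ : Differentiable ℝ h₁)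
    (g₂ h₂ : ℝ → ℝ) (fθ : ℝ → ℝ)
    (hpos : ∀ s ∈ S, 0 < volume (fθ ⁻¹' {s}))
    (D : Finset ℝ)
    (hloc : ∀ x : ℝ, x ∉ D → ∃ ε > 0, ∀ y : ℝ, |y - x| < ε → fθ y = fθ x)
    (hagree : ∀ x : ℝ, h₁ x + h₂ (fθ x) = g₁ x + g₂ (fθ x)) :
    (∀ x : ℝ, deriv h₁ x = deriv g₁ x) ∧
    (∃ c : ℝ, (∀ x : ℝ, h₁ x = g₁ x + c) ∧ ∀ s ∈ S, h₂ s = g₂ s - c) ∧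
    (∀ x₀ : ℝ, ∀ y₀ ∈ S, h₁ x₀ + h₂ y₀ = g₁ x₀ + g₂ y₀ →
      ∀ x : ℝ, ∀ y ∈ S, h₁ x + h₂ y = g₁ x + g₂ y) := by
  have hdiff_loc : ∀ x ∉ (D : Set ℝ), ∀ᶠ y in 𝓝 x, h₁ y - g₁ y = h₁ x - g₁ x := by
    intro x hx
    obtain ⟨ε, hε, hconst⟩ := hloc x hx
    filter_upwards [Metric.ball_mem_nhds x hε] with y hy
    have hfy := hconst y (Real.dist_eq y x ▸ hy)
    linarith [hagree x, hfy ▸ hagree y]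
  have hdiff_const : ∀ a b, h₁ a - g₁ a = h₁ b - g₁ b :=
    (hh₁.continuous.sub hg₁.continuous).apply_eq_apply_of_eventuallyEq_off_countable
      D.countable_toSet hdiff_loc
  set c := h₁ 0 - g₁ 0
  have hshift : ∀ x, h₁ x = g₁ x + c := fun x => by linarith [hdiff_const x 0]
  have hfiber : ∀ s ∈ S, h₂ s = g₂ s - c := fun s hs => by
    obtain ⟨x, rfl⟩ := nonempty_of_measure_ne_zero (hpos s hs).ne'
    linarith [hagree x, hshift x]
  refine ⟨fun x => ?_, ⟨c, hshift, hfiber⟩, fun _ _ _ _ x y hy => ?_⟩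
  · rw [funext hshift, deriv_add_const]
  · linarith [hshift x, hfiber y hy]

/-- Proposition 5 (Identifiability for discrete classification): for the separable
mechanism `g(x,yh) = g₁(x) + g₂(yh)` with differentiable `g₁` and discrete
prediction values `S` (`|S| ≥ 2`), each attained on a set of positive Lebesgue
measure, with the classifier `fθ` locally constant outside a finite set of
boundary points, any separable hypothesis `h₁ + h₂` with `h₁` differentiable that
agrees with `g` on the observed support `{(x, fθ x)}` satisfies `h₁' = g₁'`
everywhere, `h₁ = g₁ + c` and `h₂ = g₂ - c` on `S` for a single constant `c`;
hence `h` and `g` differ by a constant that cancels, and agreement at a single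
off-support point forces agreement everywhere. -/
theorem stmt_7 (S : Finset ℝ) (hScard : 2 ≤ S.card)
    (g₁ h₁ : ℝ → ℝ) (hg₁ : Differentiable ℝ g₁) (hh₁ : Differentiable ℝ h₁)
    (g₂ h₂ : ℝ → ℝ) (fθ : ℝ → ℝ) (hrange : ∀ x : ℝ, fθ x ∈ S)
    (hpos : ∀ s ∈ S, 0 < volume (fθ ⁻¹' {s}))
    (D : Finset ℝ)
    (hloc : ∀ x : ℝ, x ∉ D → ∃ ε > 0, ∀ y : ℝ, |y - x| < ε → fθ y = fθ x)
    (hagree : ∀ x : ℝ, h₁ x + h₂ (fθ x) = g₁ x + g₂ (fθ x)) :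
    (∀ x : ℝ, deriv h₁ x = deriv g₁ x) ∧
    (∃ c : ℝ, (∀ x : ℝ, h₁ x = g₁ x + c) ∧ ∀ s ∈ S, h₂ s = g₂ s - c) ∧
    (∀ x₀ : ℝ, ∀ y₀ ∈ S, h₁ x₀ + h₂ y₀ = g₁ x₀ + g₂ y₀ →
      ∀ x : ℝ, ∀ y ∈ S, h₁ x + h₂ y = g₁ x + g₂ y) :=
  stmt_7_general S g₁ h₁ hg₁ hh₁ g₂ h₂ fθ hpos D hloc hagree
end

section
/- Let g₁ : ℝ → ℝ and h₁ : ℝ → ℝ be differentiable, and let g₂, h₂ : 𝒮 → ℝ where 𝒮 = {s₁, s₂} with s₁ ≠ s₂. Let f_θ : ℝ → 𝒮 be given by f_θ(x) = s₁ for x < t and f_θ(x) = s₂ for x ≥ t (a threshold classifier). Assume g₁(x) + g₂(f_θ(x)) = h₁(x) + h₂(f_θ(x)) for all x ∈ ℝ, and that g₁ − h₁ is continuous at the threshold t. Then there is a constant c such that h₁ = g₁ + c on all of ℝ and h₂(s) = g₂(s) − c for both s ∈ 𝒮. Consequently h₁(x) + h₂(ŷ) = g₁(x) + g₂(ŷ)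 for ALL (x, ŷ) ∈ ℝ × 𝒮, including the unobserved combinations. -/
open Filter Topology

theorem eq_of_continuousAt_of_eq_ite_lt {α β : Type*} [TopologicalSpace α] [LinearOrder α]
    [TopologicalSpace β] [T2Space β] {f : α → β} {t : α} {a b : β} [(𝓝[<] t).NeBot]
    (hf : ContinuousAt f t) (hstep : ∀ x, f x = if x < t then a else b) : a = b := by
  have hleft : Tendsto f (𝓝[<] t) (𝓝 a) :=
    tendsto_const_nhds.congr' <| eventually_nhdsWithin_of_forall fun x hx => by
      rw [hstep x, if_pos (Set.mem_Iio.mp hx)]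
  have hcont_left : Tendsto f (𝓝[<] t) (𝓝 b) := by
    simpa [hstep t] using hf.tendsto.mono_left nhdsWithin_le_nhds
  exact tendsto_nhds_unique hleft hcont_left

theorem stmt_8_general (g₁ h₁ : ℝ → ℝ) (g₂ h₂ : ℝ → ℝ) (s₁ s₂ t : ℝ)
    (fθ : ℝ → ℝ) (hfθ : ∀ x : ℝ, fθ x = if x < t then s₁ else s₂)
    (hagree : ∀ x : ℝ, g₁ x + g₂ (fθ x) = h₁ x + h₂ (fθ x))
    (hcont : ContinuousAt (fun x => g₁ x - h₁ x) t) :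
    ∃ c : ℝ, (∀ x : ℝ, h₁ x = g₁ x + c) ∧
      h₂ s₁ = g₂ s₁ - c ∧ h₂ s₂ = g₂ s₂ - c ∧
      ∀ x : ℝ, ∀ s ∈ ({s₁, s₂} : Set ℝ), h₁ x + h₂ s = g₁ x + g₂ s := by
  set c := g₂ s₂ - h₂ s₂
  have hstep : ∀ x, g₁ x - h₁ x = if x < t then h₂ s₁ - g₂ s₁ else -c := by
    intro x
    have := hagree x
    rw [hfθ x] at this
    split_ifs at this ⊢ <;> linarith
  have hjump : h₂ s₁ - g₂ s₁ = -c := eq_of_continuousAt_of_eq_ite_lt hcont hstep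
  have hh₁ : ∀ x, h₁ x = g₁ x + c := fun x => by
    have := hstep x
    rw [hjump, ite_self] at this
    linarith
  refine ⟨c, hh₁, by linarith, by ring, ?_⟩
  rintro x s (rfl | rfl) <;> rw [hh₁] <;> linarith

/-- Threshold-classifier instantiation of identifiability from classification:
with binary predictions `s₁ ≠ s₂` produced by the threshold rule
`fθ x = if x < t then s₁ else s₂`, agreement of the separable hypothesis
`h₁ + h₂` with the mechanism `g₁ + g₂` on the observed support, together with
continuity of `g₁ - h₁` at the threshold, forces `h₁ = g₁ + c` and
`h₂ = g₂ - c` for a single constant `c`; hence `h₁ x + h₂ yh = g₁ x + g₂ yh`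
for ALL pairs, including unobserved combinations. -/
theorem stmt_8 (g₁ h₁ : ℝ → ℝ) (hg₁ : Differentiable ℝ g₁)
    (hh₁ : Differentiable ℝ h₁) (g₂ h₂ : ℝ → ℝ) (s₁ s₂ t : ℝ) (hs : s₁ ≠ s₂)
    (fθ : ℝ → ℝ) (hfθ : ∀ x : ℝ, fθ x = if x < t then s₁ else s₂)
    (hagree : ∀ x : ℝ, g₁ x + g₂ (fθ x) = h₁ x + h₂ (fθ x))
    (hcont : ContinuousAt (fun x => g₁ x - h₁ x) t) :
    ∃ c : ℝ, (∀ x : ℝ, h₁ x = g₁ x + c) ∧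
      h₂ s₁ = g₂ s₁ - c ∧ h₂ s₂ = g₂ s₂ - c ∧
      ∀ x : ℝ, ∀ s ∈ ({s₁, s₂} : Set ℝ), h₁ x + h₂ s = g₁ x + g₂ s :=
  stmt_8_general g₁ h₁ g₂ h₂ s₁ s₂ t fθ hfθ hagree hcont
end

section
/- In the linear Gaussian setting where g(x, ŷ) = βᵀx + α·ŷ with α > 0 and the training data is generated under the deterministic predictor f_θ(x) = βᵀx (so that Ŷ = βᵀX and Y = (1+α)·βᵀX + ξ), the function h(x, ŷ) = (1 + α)·ŷ achieves the same population squared risk on the training distribution as the true mechanism g, namely E[ξ²]; yet for any test predictor f_φ with E[(f_φ(X) − βᵀX)²] > 0, when both are evaluated on data generated with Y = βᵀX + α·f_φ(X) + ξ, the test risk of h exceeds the test risk of g by E[((1+α)f_φ(X) − βᵀX − α f_φ(X))²] = E[(f_φ(X) − βᵀX)²] > 0. -/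
open MeasureTheory ProbabilityTheory

/-- Failure mode in the non-identifiable linear setting: with
`g(x, yh) = βᵀx + α·yh`, training data generated under `fθ(x) = βᵀx` (so
`Ŷ = βᵀX` and `Y = (1+α)βᵀX + ξ`), the observationally equivalent model
`h(x, yh) = (1+α)·yh` achieves the same training risk `E[ξ²]` as the true
mechanism `g`; yet on test data generated under any `fφ` (with
`Y = βᵀX + α·fφ(X) + ξ`), the excess test risk of `h` over `g` equals
`E[(fφ(X) − βᵀX)²]`, which is strictly positive whenever that quantity is. -/
theorem stmt_18 {Ω : Type*} [MeasurableSpace Ω] (P : Measure Ω)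
    [IsProbabilityMeasure P] (n : ℕ)
    (X : Ω → (Fin n → ℝ)) (hX : Measurable X) (β : Fin n → ℝ)
    (ξ : Ω → ℝ) (hξ : Measurable ξ) (hmean : ∫ ω, ξ ω ∂P = 0)
    (hξ2 : Integrable (fun ω => ξ ω ^ 2) P)
    (hindep : IndepFun ξ X P)
    (α : ℝ) (hα : 0 < α)
    (fφ : (Fin n → ℝ) → ℝ) (hfφ : Measurable fφ)
    (B : Ω → ℝ) (hB : ∀ ω : Ω, B ω = ∑ i, β i * X ω i)
    (hshift2 : Integrable (fun ω => (fφ (X ω) - B ω) ^ 2) P)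
    (Ytrain Ytest : Ω → ℝ)
    (hYtrain : ∀ ω : Ω, Ytrain ω = (1 + α) * B ω + ξ ω)
    (hYtest : ∀ ω : Ω, Ytest ω = B ω + α * fφ (X ω) + ξ ω) :
    (∫ ω, ((1 + α) * B ω - Ytrain ω) ^ 2 ∂P) = (∫ ω, ξ ω ^ 2 ∂P) ∧
    (∫ ω, ((B ω + α * B ω) - Ytrain ω) ^ 2 ∂P) = (∫ ω, ξ ω ^ 2 ∂P) ∧
    (∫ ω, ((1 + α) * fφ (X ω) - Ytest ω) ^ 2 ∂P) -
        (∫ ω, ((B ω + α * fφ (X ω)) - Ytest ω) ^ 2 ∂P) =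
      (∫ ω, (fφ (X ω) - B ω) ^ 2 ∂P) ∧
    ((0 : ℝ) < (∫ ω, (fφ (X ω) - B ω) ^ 2 ∂P) →
      (∫ ω, ((B ω + α * fφ (X ω)) - Ytest ω) ^ 2 ∂P) <
        ∫ ω, ((1 + α) * fφ (X ω) - Ytest ω) ^ 2 ∂P) := by
  set D : Ω → ℝ := fun ω => fφ (X ω) - B ω with hD
  have hDmeas : Measurable D := by
    have : D = (fun x => fφ x - ∑ i, β i * x i) ∘ X := by
      funext ω; simp [hD, hB ω]
    rw [this]
    exact (hfφ.sub (by measurability)).comp hX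
  have hD2 : Integrable (fun ω => D ω ^ 2) P := hshift2
  have hDint : Integrable D P := by
    refine (hD2.add (integrable_const 1)).mono' hDmeas.aestronglyMeasurable ?_
    filter_upwards with ω
    simp only [Real.norm_eq_abs, Pi.add_apply]
    nlinarith [sq_nonneg (|D ω| - 1), abs_nonneg (D ω), sq_abs (D ω)]
  have hξint : Integrable ξ P := by
    refine (hξ2.add (integrable_const 1)).mono' hξ.aestronglyMeasurable ?_
    filter_upwards with ω
    simp only [Real.norm_eq_abs, Pi.add_apply]
    nlinarith [sq_nonneg (|ξ ω| - 1), abs_nonneg (ξ ω), sq_abs (ξ ω)]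
  have hindepD : IndepFun ξ D P := by
    have : D = (fun x => fφ x - ∑ i, β i * x i) ∘ X := by
      funext ω; simp [hD, hB ω]
    rw [this]
    exact hindep.comp measurable_id (hfφ.sub (by measurability))
  have hmulint : Integrable (fun ω => D ω * ξ ω) P :=
    hindepD.symm.integrable_mul hDint hξint
  have hcross : ∫ ω, D ω * ξ ω ∂P = 0 := by
    have := hindepD.symm.integral_mul_eq_mul_integral hDint.aestronglyMeasurable hξint.aestronglyMeasurable
    rw [show (D * ξ) = (fun ω => D ω * ξ ω) from rfl] at this
    rw [this, hmean, mul_zero]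
  have h1 : (fun ω => ((1 + α) * B ω - Ytrain ω) ^ 2) = fun ω => ξ ω ^ 2 := by
    funext ω; rw [hYtrain ω]; ring
  have h2 : (fun ω => ((B ω + α * B ω) - Ytrain ω) ^ 2) = fun ω => ξ ω ^ 2 := by
    funext ω; rw [hYtrain ω]; ring
  have h3 : (fun ω => ((1 + α) * fφ (X ω) - Ytest ω) ^ 2) =
      fun ω => (D ω ^ 2 + ξ ω ^ 2) - 2 * (D ω * ξ ω) := by
    funext ω; rw [hYtest ω]; simp only [hD]; ring
  have h4 : (fun ω => ((B ω + α * fφ (X ω)) - Ytest ω) ^ 2) = fun ω => ξ ω ^ 2 := by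
    funext ω; rw [hYtest ω]; ring
  have hadd : Integrable (fun ω => D ω ^ 2 + ξ ω ^ 2) P := hD2.add hξ2
  have key : (∫ ω, ((1 + α) * fφ (X ω) - Ytest ω) ^ 2 ∂P) =
      (∫ ω, D ω ^ 2 ∂P) + ∫ ω, ξ ω ^ 2 ∂P := by
    rw [h3, integral_sub hadd (hmulint.const_mul 2), integral_add hD2 hξ2,
      integral_const_mul, hcross]
    ring
  refine ⟨by rw [h1], by rw [h2], ?_, ?_⟩
  · rw [key, h4]; ring
  · intro hpos
    rw [key, h4]
    have : (0:ℝ) < ∫ ω, D ω ^ 2 ∂P := hpos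
    linarith
end
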